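/- Let $g \in W^{1,1}_{loc}(\mathbb{R}^n)$ with $|\nabla g| \in L^1_{loc}$. Let $P_t$ be convolution with $\varphi_t(x) = t^{-n}\varphi(x/t)$, where $\varphi$ is bounded, supported in $B(0,C)$, and $\int \varphi = 1$. Let $E_t$ be the dyadic averaging operator $E_t g(x) = \fint_{Q_{x,t}} g$, where $Q_{x,t}$ is the unique dyadic cube of side length in $(t/2, t]$ containing $x$. Then for a.e. $x \in \mathbb{R}^n$ and all $t > 0$: $|(E_t - P_t) g(x)| \le C' t \, \mathcal{M}(|\nabla g|)(x)$, where $\mathcal{M}$ is the Hardy–Littlewood maximal function and $C'$ depends on $n, C, \|\varphi\|_\infty$. -/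

import Mathlib

open MeasureTheory Metric ENNReal

/-- The dyadic cube containing `x` with side length in `(t/2, t]`. -/
def dyadicCube (n : ℕ) (t : ℝ) (x : Fin n → ℝ) : Set (Fin n → ℝ) :=
  {y | ∀ i, ⌊x i / (2 : ℝ) ^ Int.log 2 t⌋ = ⌊y i / (2 : ℝ) ^ Int.log 2 t⌋}

/-- The (uncentered-over-centered) Hardy–Littlewood maximal function. -/
noncomputable def hlMax (n : ℕ) (g : (Fin n → ℝ) → ℝ) (x : Fin n → ℝ) : ℝ≥0∞ :=
  ⨆ (r : ℝ) (_ : 0 < r),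
    (∫⁻ y in ball x r, ENNReal.ofReal |g y|) / volume (ball x r)

open Set Module

/-!
Both `E_t g(x)` and `P_t g(x)` are integrals `∫ K g` against a kernel with `∫ K = 1`,
`|K| ≤ A` and support in a ball `B(x, R)` with `A R^n ≲ 1`: for `E_t` take `K = 1_Q / |Q|`,
the dyadic cube `Q` of side `h ≤ t` lying in the sup-norm ball `B(x, h)`. Hence `|∫ K g - g(x)|`
is at most `A ∫_{B(x,R)} |g(y) - g(x)| dy`. Writing `g(y) - g(x)` as the integral of `∇g` along
`[x, y]` and rescaling `B(x, R)` by the factor `s` at the point `x + s(y - x)` of the segment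
bounds this integral by `R |B(x,R)| ℳ(|∇g|)(x)`.
-/

theorem enorm_sub_le_lintegral_enorm_deriv {F : Type*} [NormedAddCommGroup F] [NormedSpace ℝ F]
    [CompleteSpace F] {f : ℝ → F} (hf : Differentiable ℝ f) {a b : ℝ} (hab : a ≤ b) :
    ‖f b - f a‖ₑ ≤ ∫⁻ s in Ioc a b, ‖deriv f s‖ₑ := by
  by_cases hint : IntegrableOn (deriv f) (Ioc a b)
  · rw [← intervalIntegral.integral_eq_sub_of_hasDerivAt (fun s _ => (hf s).hasDerivAt)
      ((intervalIntegrable_iff_integrableOn_Ioc_of_le hab).2 hint),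
      intervalIntegral.integral_of_le hab]
    exact enorm_integral_le_lintegral_enorm _
  · have : ¬HasFiniteIntegral (deriv f) (volume.restrict (Ioc a b)) := fun h =>
      hint ⟨(stronglyMeasurable_deriv f).aestronglyMeasurable, h⟩
    rw [HasFiniteIntegral, not_lt_top] at this
    simp [this]

theorem enorm_sub_le_mul_lintegral_enorm_fderiv_segment {E F : Type*} [NormedAddCommGroup E]
    [NormedSpace ℝ E] [NormedAddCommGroup F] [NormedSpace ℝ F] [CompleteSpace F]
    {g : E → F} (hg : Differentiable ℝ g) (x z : E) :
    ‖g z - g x‖ₑ ≤ ‖z - x‖ₑ * ∫⁻ s in Ioc (0 : ℝ) 1, ‖fderiv ℝ g (x + s • (z - x))‖ₑ := by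
  have hderiv (s : ℝ) : HasDerivAt (fun s : ℝ => g (x + s • (z - x)))
      (fderiv ℝ g (x + s • (z - x)) (z - x)) s := by
    have := ((hasDerivAt_id s).smul_const (z - x)).const_add x
    rw [one_smul] at this
    exact (hg _).hasFDerivAt.comp_hasDerivAt s this
  have := enorm_sub_le_lintegral_enorm_deriv (fun s => (hderiv s).differentiableAt) zero_le_one
  simp only [one_smul, zero_smul, add_zero, add_sub_cancel, (hderiv _).deriv] at this
  refine this.trans ?_
  rw [← lintegral_const_mul' _ _ enorm_ne_top]
  refine lintegral_mono fun s => ?_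
  rw [mul_comm]
  exact ContinuousLinearMap.le_opENorm _ _

theorem lintegral_ball_comp_homothety {E : Type*} [NormedAddCommGroup E] [NormedSpace ℝ E]
    [MeasurableSpace E] [BorelSpace E] [FiniteDimensional ℝ E] (μ : Measure E)
    [μ.IsAddHaarMeasure] {F : E → ℝ≥0∞} (hF : Measurable F) (x : E) {s : ℝ} (hs : 0 < s)
    (r : ℝ) :
    ∫⁻ y in ball x r, F (x + s • (y - x)) ∂μ =
      ENNReal.ofReal ((s ^ finrank ℝ E)⁻¹) * ∫⁻ w in ball x (s * r), F w ∂μ := by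
  set G := (ball x (s * r)).indicator F
  have hG : Measurable G := hF.indicator measurableSet_ball
  have hmem (y : E) : x + s • (y - x) ∈ ball x (s * r) ↔ y ∈ ball x r := by
    simp only [mem_ball, dist_eq_norm, add_sub_cancel_left, norm_smul, Real.norm_of_nonneg hs.le,
      mul_lt_mul_iff_right₀ hs]
  have hind :
      (ball x r).indicator (fun y => F (x + s • (y - x))) = fun y => G (x + s • (y - x)) := by
    ext y
    by_cases hy : y ∈ ball x r
    · simp [G, hy, (hmem y).2 hy]
    · simp [G, hy, mt (hmem y).1 hy]
  rw [← lintegral_indicator measurableSet_ball, hind,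
    lintegral_sub_right_eq_self (fun y => G (x + s • y)),
    ← lintegral_map (f := fun w => G (x + w)) (hG.comp (measurable_const_add x))
      (measurable_const_smul s),
    Measure.map_addHaar_smul μ hs.ne', lintegral_smul_measure, lintegral_add_left_eq_self,
    lintegral_indicator measurableSet_ball, abs_of_pos (by positivity), smul_eq_mul]

theorem lintegral_ball_enorm_sub_le {E F : Type*} [NormedAddCommGroup E] [NormedSpace ℝ E]
    [MeasurableSpace E] [BorelSpace E] [FiniteDimensional ℝ E] [NormedAddCommGroup F]
    [NormedSpace ℝ F] [CompleteSpace F] (μ : Measure E) [μ.IsAddHaarMeasure] {g : E → F}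
    (hg : Differentiable ℝ g) (x : E) {r : ℝ} (hr : 0 < r) {M : ℝ≥0∞}
    (hM : ∀ ρ, 0 < ρ → ∫⁻ y in ball x ρ, ‖fderiv ℝ g y‖ₑ ∂μ ≤ μ (ball x ρ) * M) :
    ∫⁻ y in ball x r, ‖g y - g x‖ₑ ∂μ ≤ ENNReal.ofReal r * μ (ball x r) * M := by
  set D : E → ℝ≥0∞ := fun y => ‖fderiv ℝ g y‖ₑ
  have hD : Measurable D := (measurable_fderiv ℝ g).enorm
  have hslice : ∀ s ∈ Ioc (0 : ℝ) 1,
      ∫⁻ y in ball x r, D (x + s • (y - x)) ∂μ ≤ μ (ball x r) * M := by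
    rintro s ⟨hs, -⟩
    rw [lintegral_ball_comp_homothety μ hD x hs]
    calc ENNReal.ofReal ((s ^ finrank ℝ E)⁻¹) * ∫⁻ w in ball x (s * r), D w ∂μ
        ≤ ENNReal.ofReal ((s ^ finrank ℝ E)⁻¹) * (μ (ball x (s * r)) * M) := by
          gcongr
          exact hM _ (mul_pos hs hr)
      _ = μ (ball x r) * M := by
          rw [Measure.addHaar_ball_mul_of_pos μ x hs, ← Measure.addHaar_ball_center μ x,
            ← mul_assoc, ← mul_assoc, ← ENNReal.ofReal_mul (by positivity),
            inv_mul_cancel₀ (by positivity), ENNReal.ofReal_one, one_mul]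
  calc ∫⁻ y in ball x r, ‖g y - g x‖ₑ ∂μ
      ≤ ∫⁻ y in ball x r, ENNReal.ofReal r * (∫⁻ s in Ioc (0 : ℝ) 1, D (x + s • (y - x))) ∂μ := by
        refine setLIntegral_mono' measurableSet_ball fun y hy => ?_
        refine (enorm_sub_le_mul_lintegral_enorm_fderiv_segment hg x y).trans ?_
        gcongr
        rw [← ofReal_norm, ← dist_eq_norm]
        exact ENNReal.ofReal_le_ofReal (mem_ball.1 hy).le
    _ = ENNReal.ofReal r * ∫⁻ s in Ioc (0 : ℝ) 1, ∫⁻ y in ball x r, D (x + s • (y - x)) ∂μ := by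
        rw [lintegral_const_mul' _ _ ofReal_ne_top, lintegral_lintegral_swap]
        exact (hD.comp (by fun_prop)).aemeasurable
    _ ≤ ENNReal.ofReal r * ∫⁻ s in Ioc (0 : ℝ) 1, μ (ball x r) * M :=
        mul_le_mul_right (setLIntegral_mono' measurableSet_Ioc hslice) _
    _ = ENNReal.ofReal r * μ (ball x r) * M := by
        rw [setLIntegral_const, Real.volume_Ioc, sub_zero, ENNReal.ofReal_one, mul_one, mul_assoc]

theorem enorm_integral_mul_sub_le_lintegral_ball {X : Type*} [MeasurableSpace X]
    [PseudoMetricSpace X] [ProperSpace X] [OpensMeasurableSpace X] {μ : Measure X}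
    [IsLocallyFiniteMeasure μ] {K g : X → ℝ} {x : X} {A R : ℝ} (hK : AEStronglyMeasurable K μ)
    (hK1 : ∫ y, K y ∂μ = 1) (hKA : ∀ y, ‖K y‖ ≤ A) (hKsupp : ∀ y, K y ≠ 0 → y ∈ ball x R)
    (hg : LocallyIntegrable g μ) :
    ‖(∫ y, K y * g y ∂μ) - g x‖ₑ ≤ ENNReal.ofReal A * ∫⁻ y in ball x R, ‖g y - g x‖ₑ ∂μ := by
  have hbound (h : X → ℝ) (y : X) :
      ‖K y * h y‖ ≤ (ball x R).indicator (fun y => A * ‖h y‖) y := by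
    by_cases hy : y ∈ ball x R
    · rw [indicator_of_mem hy, norm_mul]
      exact mul_le_mul_of_nonneg_right (hKA y) (norm_nonneg _)
    · rw [indicator_of_notMem hy, not_imp_comm.1 (hKsupp y) hy, zero_mul, norm_zero]
  have hint {h : X → ℝ} (hh : LocallyIntegrable h μ) : Integrable (fun y => K y * h y) μ := by
    refine Integrable.mono' ?_ (hK.mul hh.aestronglyMeasurable) (ae_of_all _ (hbound h))
    refine IntegrableOn.integrable_indicator ?_ measurableSet_ball
    exact ((hh.integrableOn_isCompact (isCompact_closedBall x R)).mono_set
      ball_subset_closedBall).norm.const_mul A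
  have hKint : Integrable K μ := by simpa using hint (locallyIntegrable_const 1)
  have hA : 0 ≤ A := (norm_nonneg _).trans (hKA x)
  have hsub : (∫ y, K y * g y ∂μ) - g x = ∫ y, K y * (g y - g x) ∂μ := by
    simp_rw [mul_sub]
    rw [integral_sub (hint hg) (hKint.mul_const (g x)), integral_mul_const, hK1, one_mul]
  rw [hsub, ← lintegral_const_mul' _ _ ofReal_ne_top, ← lintegral_indicator measurableSet_ball]
  refine (enorm_integral_le_lintegral_enorm _).trans (lintegral_mono fun y => ?_)
  calc ‖K y * (g y - g x)‖ₑ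
      ≤ ENNReal.ofReal ((ball x R).indicator (fun y => A * ‖g y - g x‖) y) := by
        rw [← ofReal_norm]
        exact ENNReal.ofReal_le_ofReal (hbound (fun y => g y - g x) y)
    _ = (ball x R).indicator (fun y => ENNReal.ofReal A * ‖g y - g x‖ₑ) y := by
        by_cases hy : y ∈ ball x R <;> simp [hy, ENNReal.ofReal_mul hA, Real.enorm_eq_ofReal_abs]

theorem lintegral_ball_le_volume_mul_hlMax {n : ℕ} (f : (Fin n → ℝ) → ℝ) (x : Fin n → ℝ)
    {ρ : ℝ} (hρ : 0 < ρ) :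
    ∫⁻ y in ball x ρ, ‖f y‖ₑ ≤ volume (ball x ρ) * hlMax n f x := by
  have h := le_iSup₂ (f := fun (r : ℝ) (_ : 0 < r) =>
    (∫⁻ y in ball x r, ENNReal.ofReal |f y|) / volume (ball x r)) ρ hρ
  rw [ENNReal.div_le_iff (measure_ball_pos volume x hρ).ne' measure_ball_lt_top.ne] at h
  simp_rw [Real.enorm_eq_ofReal_abs]
  rw [mul_comm]
  exact h

theorem enorm_integral_mul_sub_le_hlMax {n : ℕ} {K g : (Fin n → ℝ) → ℝ} {x : Fin n → ℝ}
    {A R : ℝ} (hR : 0 < R) (hK : AEStronglyMeasurable K) (hK1 : ∫ y, K y = 1)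
    (hKA : ∀ y, ‖K y‖ ≤ A) (hKsupp : ∀ y, K y ≠ 0 → y ∈ ball x R)
    (hg : Differentiable ℝ g) (hgl : LocallyIntegrable g) :
    ‖(∫ y, K y * g y) - g x‖ₑ ≤
      ENNReal.ofReal (A * R * (2 * R) ^ n) * hlMax n (fun y => ‖fderiv ℝ g y‖) x := by
  have hA : 0 ≤ A := (norm_nonneg _).trans (hKA x)
  have hM (ρ : ℝ) (hρ : 0 < ρ) : ∫⁻ y in ball x ρ, ‖fderiv ℝ g y‖ₑ ≤
      volume (ball x ρ) * hlMax n (fun y => ‖fderiv ℝ g y‖) x := by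
    simpa only [enorm_norm] using lintegral_ball_le_volume_mul_hlMax (fun y => ‖fderiv ℝ g y‖) x hρ
  refine (enorm_integral_mul_sub_le_lintegral_ball hK hK1 hKA hKsupp hgl).trans ?_
  refine (mul_le_mul_right (lintegral_ball_enorm_sub_le volume hg x hR hM) _).trans_eq ?_
  rw [Real.volume_pi_ball x hR, Fintype.card_fin, ← mul_assoc, ← mul_assoc,
    ← ENNReal.ofReal_mul hA, ← ENNReal.ofReal_mul (by positivity)]

theorem setAverage_eq_integral_indicator_mul {α : Type*} [MeasurableSpace α] {μ : Measure α}
    {s : Set α} (hs : MeasurableSet s) (f : α → ℝ) :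
    ⨍ y in s, f y ∂μ = ∫ y, s.indicator (fun _ => (μ.real s)⁻¹) y * f y ∂μ := by
  simp_rw [← indicator_mul_left]
  rw [setAverage_eq, integral_indicator hs, integral_const_mul, smul_eq_mul]

section dyadic

variable (n : ℕ) (t : ℝ) (x : Fin n → ℝ)

theorem dyadicCube_eq_pi :
    dyadicCube n t x = univ.pi fun i =>
      Ico ((2 : ℝ) ^ Int.log 2 t * ⌊x i / (2 : ℝ) ^ Int.log 2 t⌋)
        ((2 : ℝ) ^ Int.log 2 t * (⌊x i / (2 : ℝ) ^ Int.log 2 t⌋ + 1)) := by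
  have hh : (0 : ℝ) < 2 ^ Int.log 2 t := zpow_pos two_pos _
  ext y
  simp only [dyadicCube, mem_ofPred_eq, mem_univ_pi, mem_Ico]
  refine forall_congr' fun i => ?_
  rw [eq_comm, Int.floor_eq_iff, le_div_iff₀ hh, div_lt_iff₀ hh, mul_comm, mul_comm (_ + 1 : ℝ)]

theorem measurableSet_dyadicCube : MeasurableSet (dyadicCube n t x) := by
  rw [dyadicCube_eq_pi]
  exact MeasurableSet.univ_pi fun _ => measurableSet_Ico

theorem volume_real_dyadicCube : volume.real (dyadicCube n t x) = ((2 : ℝ) ^ Int.log 2 t) ^ n := by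
  rw [measureReal_def, dyadicCube_eq_pi, Real.volume_pi_Ico, Finset.prod_congr rfl
    fun i _ => by rw [← mul_sub, add_sub_cancel_left, mul_one], Finset.prod_const,
    Finset.card_univ, Fintype.card_fin,
    ← ENNReal.ofReal_pow (by positivity : (0 : ℝ) ≤ 2 ^ Int.log 2 t),
    ENNReal.toReal_ofReal (by positivity)]

theorem dyadicCube_subset_ball : dyadicCube n t x ⊆ ball x (2 ^ Int.log 2 t) := by
  have hh : (0 : ℝ) < 2 ^ Int.log 2 t := zpow_pos two_pos _
  intro y hy
  rw [mem_ball, dist_pi_lt_iff hh]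
  intro i
  have := Int.abs_sub_lt_one_of_floor_eq_floor (hy i)
  rw [← sub_div, abs_div, abs_of_pos hh, div_lt_one hh] at this
  rwa [Real.dist_eq, abs_sub_comm]

end dyadic

theorem enorm_setAverage_dyadicCube_sub_le {n : ℕ} {g : (Fin n → ℝ) → ℝ}
    (hg : Differentiable ℝ g) (hgl : LocallyIntegrable g) (x : Fin n → ℝ) {t : ℝ} (ht : 0 < t) :
    ‖(⨍ y in dyadicCube n t x, g y) - g x‖ₑ ≤
      ENNReal.ofReal (2 ^ n * t) * hlMax n (fun y => ‖fderiv ℝ g y‖) x := by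
  set Q := dyadicCube n t x
  set h : ℝ := 2 ^ Int.log 2 t
  have hh : 0 < h := by positivity
  have hQ : volume.real Q = h ^ n := volume_real_dyadicCube n t x
  rw [setAverage_eq_integral_indicator_mul (measurableSet_dyadicCube n t x), hQ]
  refine (enorm_integral_mul_sub_le_hlMax (A := (h ^ n)⁻¹) hh
    ((measurable_const.indicator (measurableSet_dyadicCube n t x)).aestronglyMeasurable)
    ?_ (fun y => ?_) (fun y hy => ?_) hg hgl).trans ?_
  · rw [integral_indicator_const _ (measurableSet_dyadicCube n t x), hQ, smul_eq_mul,
      mul_inv_cancel₀ (by positivity)]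
  · exact (norm_indicator_le_norm_self _ _).trans (Real.norm_of_nonneg (by positivity)).le
  · exact dyadicCube_subset_ball n t x (not_imp_comm.1 (indicator_of_notMem · _) hy)
  · have hht : h ≤ t := Int.zpow_log_le_self one_lt_two ht
    have : (h ^ n)⁻¹ * h * (2 * h) ^ n = 2 ^ n * h := by
      rw [mul_pow]
      field_simp
    rw [this]
    gcongr

theorem integral_rescaled_kernel {E : Type*} [NormedAddCommGroup E] [NormedSpace ℝ E]
    [MeasurableSpace E] [BorelSpace E] [FiniteDimensional ℝ E] (μ : Measure E)
    [μ.IsAddHaarMeasure] (φ : E → ℝ) (x : E) {t : ℝ} (ht : 0 < t) :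
    ∫ y, t ^ (-(finrank ℝ E : ℝ)) * φ (t⁻¹ • (x - y)) ∂μ = ∫ z, φ z ∂μ := by
  rw [integral_const_mul, integral_sub_left_eq_self (fun y => φ (t⁻¹ • y)) μ x,
    Measure.integral_comp_inv_smul_of_nonneg μ φ ht.le, smul_eq_mul, ← mul_assoc,
    Real.rpow_neg ht.le, Real.rpow_natCast, inv_mul_cancel₀ (by positivity), one_mul]

theorem enorm_integral_rescaled_kernel_mul_sub_le {n : ℕ} {φ : (Fin n → ℝ) → ℝ} {C : ℝ}
    (hC : 0 < C) (hφmeas : Measurable φ) (hφbdd : ∀ z, |φ z| ≤ C)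
    (hφsupp : ∀ z, C ≤ ‖z‖ → φ z = 0) (hφint : ∫ z, φ z = 1) {g : (Fin n → ℝ) → ℝ}
    (hg : Differentiable ℝ g) (hgl : LocallyIntegrable g) (x : Fin n → ℝ) {t : ℝ} (ht : 0 < t) :
    ‖(∫ y, t ^ (-(n : ℝ)) * φ (t⁻¹ • (x - y)) * g y) - g x‖ₑ ≤
      ENNReal.ofReal (C ^ 2 * (2 * C) ^ n * t) * hlMax n (fun y => ‖fderiv ℝ g y‖) x := by
  have htn : 0 < t ^ (-(n : ℝ)) := Real.rpow_pos_of_pos ht _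
  have hK1 : ∫ y, t ^ (-(n : ℝ)) * φ (t⁻¹ • (x - y)) = 1 := by
    simpa only [finrank_fin_fun, hφint] using integral_rescaled_kernel volume φ x ht
  have hKsupp (y : Fin n → ℝ) (hy : t ^ (-(n : ℝ)) * φ (t⁻¹ • (x - y)) ≠ 0) :
      y ∈ ball x (C * t) := by
    rw [mem_ball, dist_eq_norm]
    by_contra hfar
    refine hy (mul_eq_zero_of_right _ (hφsupp _ ?_))
    rw [norm_smul, norm_inv, Real.norm_of_nonneg ht.le, norm_sub_rev, le_inv_mul_iff₀ ht,
      mul_comm]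
    exact not_lt.1 hfar
  have hKA (y : Fin n → ℝ) : ‖t ^ (-(n : ℝ)) * φ (t⁻¹ • (x - y))‖ ≤ t ^ (-(n : ℝ)) * C := by
    rw [norm_mul, Real.norm_of_nonneg htn.le, Real.norm_eq_abs]
    exact mul_le_mul_of_nonneg_left (hφbdd _) htn.le
  have hK : AEStronglyMeasurable fun y => t ^ (-(n : ℝ)) * φ (t⁻¹ • (x - y)) :=
    ((hφmeas.comp (by fun_prop)).const_mul _).aestronglyMeasurable
  refine (enorm_integral_mul_sub_le_hlMax (mul_pos hC ht) hK hK1 hKA hKsupp hg hgl).trans_eq ?_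
  rw [Real.rpow_neg ht.le, Real.rpow_natCast]
  congr 2
  field_simp
  ring

theorem stmt_9_general (n : ℕ)
    (φ : (Fin n → ℝ) → ℝ) (Cφ : ℝ) (hCφ : 0 < Cφ)
    (hφmeas : Measurable φ) (hφbdd : ∀ z, |φ z| ≤ Cφ)
    (hφsupp : ∀ z, Cφ ≤ ‖z‖ → φ z = 0)
    (hφint : ∫ z, φ z = 1) :
    ∃ C' : ℝ, 0 < C' ∧
      ∀ g : (Fin n → ℝ) → ℝ, Differentiable ℝ g →
        MeasureTheory.LocallyIntegrable g →
        MeasureTheory.LocallyIntegrable (fun y => ‖fderiv ℝ g y‖) →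
        ∀ᵐ x, ∀ t : ℝ, 0 < t →
          ENNReal.ofReal
              |(⨍ y in dyadicCube n t x, g y) -
                ∫ y, t ^ (-(n : ℝ)) * φ (t⁻¹ • (x - y)) * g y| ≤
            ENNReal.ofReal (C' * t) * hlMax n (fun y => ‖fderiv ℝ g y‖) x := by
  refine ⟨2 ^ n + Cφ ^ 2 * (2 * Cφ) ^ n, by positivity,
    fun g hg hgl _ => ae_of_all _ fun x t ht => ?_⟩
  rw [← Real.enorm_eq_ofReal_abs, add_mul, ENNReal.ofReal_add (by positivity) (by positivity),
    add_mul]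
  calc _ ≤ ‖(⨍ y in dyadicCube n t x, g y) - g x‖ₑ +
        ‖(∫ y, t ^ (-(n : ℝ)) * φ (t⁻¹ • (x - y)) * g y) - g x‖ₑ := by
          simpa only [edist_eq_enorm_sub, enorm_sub_rev (g x)] using edist_triangle _ (g x) _
    _ ≤ _ := add_le_add (enorm_setAverage_dyadicCube_sub_le hg hgl x ht)
        (enorm_integral_rescaled_kernel_mul_sub_le hCφ hφmeas hφbdd hφsupp hφint hg hgl x ht)

/-- Comparison of the dyadic averaging operator `E_t` with a compactly supported
approximate identity `P_t`: `|(E_t - P_t)g(x)| ≤ C' t ℳ(|∇g|)(x)`. -/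
theorem stmt_9 (n : ℕ) (hn : 0 < n)
    (φ : (Fin n → ℝ) → ℝ) (Cφ : ℝ) (hCφ : 0 < Cφ)
    (hφmeas : Measurable φ) (hφbdd : ∀ z, |φ z| ≤ Cφ)
    (hφsupp : ∀ z, Cφ ≤ ‖z‖ → φ z = 0)
    (hφint : ∫ z, φ z = 1) :
    ∃ C' : ℝ, 0 < C' ∧
      ∀ g : (Fin n → ℝ) → ℝ, Differentiable ℝ g →
        MeasureTheory.LocallyIntegrable g →
        MeasureTheory.LocallyIntegrable (fun y => ‖fderiv ℝ g y‖) →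
        ∀ᵐ x, ∀ t : ℝ, 0 < t →
          ENNReal.ofReal
              |(⨍ y in dyadicCube n t x, g y) -
                ∫ y, t ^ (-(n : ℝ)) * φ (t⁻¹ • (x - y)) * g y| ≤
            ENNReal.ofReal (C' * t) * hlMax n (fun y => ‖fderiv ℝ g y‖) x :=
  stmt_9_general n φ Cφ hCφ hφmeas hφbdd hφsupp hφint
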